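/- arXiv:1706.09672 — 2 statements merged into one kernel-verified Lean document; each statement's English description precedes it below -/
import Mathlib

section
/- Let u_h be a piecewise linear finite element function on a triangulation T_h of the disk D, harmonic in the discrete sense (∫ ∇u_h·∇v_h = 0 for all piecewise linear v_h vanishing on boundary nodes). Then u_h attains its maximum and minimum over D_h at boundary nodes, provided the triangulation is of non-negative type (all stiffness matrix off-diagonal entries α_{ij} ≤ 0 for i ≠ j). -/
open Finset

lemma dmp_aux {N : ℕ} (α : Matrix (Fin N) (Fin N) ℝ)
    (B : Finset (Fin N)) (hB : B.Nonempty)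
    (hrow : ∀ i, ∑ j, α i j = 0)
    (hconn : ∀ i, ∃ b ∈ B, Relation.ReflTransGen (fun p q => α p q ≠ 0 ∧ p ≠ q) i b)
    (hnonneg : ∀ i j, i ≠ j → α i j ≤ 0)
    (u : Fin N → ℝ)
    (hharm : ∀ i, i ∉ B → ∑ j, α i j * u j = 0) :
    ∃ b ∈ B, ∀ k, u k ≤ u b := by
  obtain ⟨b0, hb0⟩ := hB
  obtain ⟨i0, -, hmax⟩ := Finset.exists_max_image Finset.univ u ⟨b0, Finset.mem_univ b0⟩
  set M := u i0 with hM
  have hle : ∀ k, u k ≤ M := fun k => hmax k (Finset.mem_univ k)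
  -- key step: at an interior max node, all neighbors are max
  have step : ∀ i, i ∉ B → u i = M → ∀ j, α i j ≠ 0 → u j = M := by
    intro i hi hiM j hij
    have h0 : ∑ j, α i j * (u j - M) = 0 := by
      have : ∑ j, α i j * (u j - M) = (∑ j, α i j * u j) - (∑ j, α i j) * M := by
        rw [Finset.sum_mul]
        rw [← Finset.sum_sub_distrib]
        congr 1; ext j; ring
      rw [this, hharm i hi, hrow i]; ring
    have hpos : ∀ k ∈ Finset.univ, 0 ≤ α i k * (u k - M) := by
      intro k _
      by_cases hk : k = i
      · subst hk; rw [hiM]; simp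
      · nlinarith [hnonneg i k (Ne.symm hk), hle k]
    have hz := (Finset.sum_eq_zero_iff_of_nonneg hpos).1 h0 j (Finset.mem_univ j)
    rcases mul_eq_zero.1 hz with h | h
    · exact absurd h hij
    · linarith [sub_eq_zero.1 h]
  obtain ⟨b, hbB, hpath⟩ := hconn i0
  have key : ∀ i, Relation.ReflTransGen (fun p q => α p q ≠ 0 ∧ p ≠ q) i b →
      u i = M → ∃ c ∈ B, u c = M := by
    intro i h
    induction h using Relation.ReflTransGen.head_induction_on with
    | refl => intro hi; exact ⟨b, hbB, hi⟩
    | head hac _ ih =>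
      intro hi
      rename_i a c _
      by_cases hmem : a ∈ B
      · exact ⟨a, hmem, hi⟩
      · exact ih (step a hmem hi c hac.1)
  obtain ⟨c, hcB, hc⟩ := key i0 hpath rfl
  exact ⟨c, hcB, fun k => hc ▸ hle k⟩

/-- **discrete maximum principle.** Let `u` be a piecewise linear finite
element function, identified with its nodal values `u : Fin N → ℝ`, on a triangulation
with stiffness matrix `α` (`α i j = ∫ ∇η_i·∇η_j`), boundary node set `B`, which is
discrete harmonic: `Σ_j α i j * u j = 0` at every interior node `i ∉ B`.  The stiffness
matrix of a triangulation is symmetric, has zero row sums (constants are discrete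
harmonic), positive diagonal, and connects every node to the boundary through nonzero
off-diagonal entries.  If the triangulation is of non-negative type (`α i j ≤ 0` for
`i ≠ j`), then `u` attains its maximum and minimum over `D_h` at boundary nodes. -/
theorem discrete_maximum_principle {N : ℕ} (α : Matrix (Fin N) (Fin N) ℝ)
    (B : Finset (Fin N)) (hB : B.Nonempty)
    (hsymm : α.IsSymm)
    (hdiag : ∀ i, 0 < α i i)
    (hrow : ∀ i, ∑ j, α i j = 0)
    (hconn : ∀ i, ∃ b ∈ B, Relation.ReflTransGen (fun p q => α p q ≠ 0 ∧ p ≠ q) i b)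
    (hnonneg : ∀ i j, i ≠ j → α i j ≤ 0)
    (u : Fin N → ℝ)
    (hharm : ∀ i, i ∉ B → ∑ j, α i j * u j = 0) :
    (∃ b ∈ B, ∀ k, u k ≤ u b) ∧ (∃ b ∈ B, ∀ k, u b ≤ u k) := by
  constructor
  · exact dmp_aux α B hB hrow hconn hnonneg u hharm
  · obtain ⟨b, hbB, hb⟩ := dmp_aux α B hB hrow hconn hnonneg (fun k => -u k)
      (fun i hi => by
        have := hharm i hi
        simp only [mul_neg, Finset.sum_neg_distrib]
        rw [this]; ring)
    exact ⟨b, hbB, fun k => by have := hb k; simpa using this⟩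
end

section
/- Courant–Lebesgue lemma: let φ ∈ H¹(D;ℝᵈ) with D(φ) ≤ M, let p ∈ D̄, and 0 < δ < 1. Then there exists ρ ∈ [δ, √δ] such that the restriction of φ to the arc C_ρ = D ∩ ∂B(p,ρ) is absolutely continuous and its length satisfies (length)² ≤ (2π · 4M)/log(1/δ). -/
open MeasureTheory RealInnerProductSpace
open scoped Real

noncomputable section

/-- The open unit disk, viewed as a subset of `ℂ ≅ ℝ²`. -/
def unitDisk : Set ℂ := Metric.ball 0 1

variable {d : ℕ}

/-- `ψ_u`, the partial derivative in the `u`-direction. -/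
def pu (ψ : ℂ → EuclideanSpace ℝ (Fin d)) (p : ℂ) : EuclideanSpace ℝ (Fin d) :=
  fderiv ℝ ψ p 1

/-- `ψ_v`, the partial derivative in the `v`-direction. -/
def pv (ψ : ℂ → EuclideanSpace ℝ (Fin d)) (p : ℂ) : EuclideanSpace ℝ (Fin d) :=
  fderiv ℝ ψ p Complex.I

/-- The Dirichlet integral `D(ψ) = (1/2)∫_D |∇ψ|²`. -/
def dirichletIntegral (ψ : ℂ → EuclideanSpace ℝ (Fin d)) : ℝ :=
  (1 / 2) * ∫ p in unitDisk, (‖pu ψ p‖ ^ 2 + ‖pv ψ p‖ ^ 2)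

/-- The area functional `A(ψ) = ∫_D |ψ_u ∧ ψ_v|`. -/
def areaFunctional (ψ : ℂ → EuclideanSpace ℝ (Fin d)) : ℝ :=
  ∫ p in unitDisk, Real.sqrt (‖pu ψ p‖ ^ 2 * ‖pv ψ p‖ ^ 2 - ⟪pu ψ p, pv ψ p⟫ ^ 2)

/-- The length of the image under `φ` of the arc `C_ρ = D ∩ ∂B(p,ρ)`, computed in the
angular parametrization `θ ↦ p + ρ e^{iθ}`. -/
def arcImageLength (φ : ℂ → EuclideanSpace ℝ (Fin d)) (p : ℂ) (ρ : ℝ) : ℝ :=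
  ∫ θ in {θ : ℝ | θ ∈ Set.Icc 0 (2 * π) ∧ p + ρ * Complex.exp (θ * Complex.I) ∈ unitDisk},
    ‖deriv (fun t : ℝ => φ (p + ρ * Complex.exp ((t : ℂ) * Complex.I))) θ‖

/-!
Integrating `|∇φ|²` in polar coordinates about `p`, the function `r ↦ r ∫ |∇φ(p + r e^{iθ})|² dθ`
has integral at most `2M` over `(δ, √δ]`, while `1/r` has integral `log(1/δ)/2` there; hence some
radius `r` in this range has `r² ∫ |∇φ(p + r e^{iθ})|² dθ ≤ 4M / log(1/δ)`. Along that circle the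
chain rule gives `|∂_θ φ| ≤ r |∇φ|`, and Cauchy–Schwarz over the arc, of angular measure at most
`2π`, bounds the squared length by `2π r² ∫ |∇φ|² dθ`.
-/

open Set Function
open scoped ENNReal

theorem Function.Periodic.setLIntegral_Ioc_add_eq {f : ℝ → ℝ≥0∞} {T : ℝ} (hf : Periodic f T)
    (hT : 0 < T) (t s : ℝ) :
    ∫⁻ x in Ioc t (t + T), f x = ∫⁻ x in Ioc s (s + T), f x :=
  (isAddFundamentalDomain_Ioc hT t).setLIntegral_eq (isAddFundamentalDomain_Ioc hT s) f
    fun g x => by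
      obtain ⟨n, hn⟩ := AddSubgroup.mem_zmultiples_iff.mp g.2
      rw [AddSubgroup.vadd_def, vadd_eq_add, ← hn, add_comm]
      exact hf.zsmul n x

theorem sq_lintegral_le_measure_univ_mul_lintegral_sq {α : Type*} [MeasurableSpace α]
    (μ : Measure α) {f : α → ℝ≥0∞} (hf : AEMeasurable f μ) :
    (∫⁻ x, f x ∂μ) ^ 2 ≤ μ univ * ∫⁻ x, f x ^ 2 ∂μ := by
  have h := ENNReal.lintegral_mul_le_Lp_mul_Lq μ Real.HolderConjugate.two_two hf
    aemeasurable_const (g := fun _ => 1)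
  simp only [Pi.mul_apply, mul_one, lintegral_const, one_pow, one_mul, ENNReal.rpow_ofNat] at h
  calc (∫⁻ x, f x ∂μ) ^ 2
      ≤ ((∫⁻ x, f x ^ 2 ∂μ) ^ (1 / 2 : ℝ) * μ univ ^ (1 / 2 : ℝ)) ^ 2 := by gcongr
    _ = μ univ * ∫⁻ x, f x ^ 2 ∂μ := by
      rw [mul_pow, ← ENNReal.rpow_natCast, ← ENNReal.rpow_natCast (_ ^ _), ← ENNReal.rpow_mul,
        ← ENNReal.rpow_mul]
      norm_num [mul_comm]

theorem lintegral_Ioc_ofReal_inv {a b : ℝ} (ha : 0 < a) (hab : a ≤ b) :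
    ∫⁻ r in Ioc a b, ENNReal.ofReal r⁻¹ = ENNReal.ofReal (Real.log (b / a)) := by
  have hint : IntegrableOn (fun r : ℝ => r⁻¹) (Ioc a b) :=
    (ContinuousOn.integrableOn_Icc (continuousOn_inv₀.mono fun r hr =>
      (ha.trans_le hr.1).ne')).mono_set Ioc_subset_Icc_self
  rw [← ofReal_integral_eq_lintegral_ofReal hint
      ((ae_restrict_mem measurableSet_Ioc).mono fun r hr => inv_nonneg.2 (ha.trans hr.1).le),
    ← intervalIntegral.integral_of_le hab, integral_inv_of_pos ha (ha.trans_le hab)]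

theorem lintegral_eq_lintegral_Ioi_mul_lintegral_circleMap {f : ℂ → ℝ≥0∞} (hf : Measurable f)
    (c : ℂ) :
    ∫⁻ z, f z =
      ∫⁻ r in Ioi 0, ENNReal.ofReal r * ∫⁻ θ in Ioc 0 (2 * π), f (circleMap c r θ) := by
  have hpolar : ∀ q : ℝ × ℝ, c + Complex.polarCoord.symm q = circleMap c q.1 q.2 := fun q => by
    simp [circleMap, Complex.exp_mul_I]
  have hmeas : Measurable fun q : ℝ × ℝ => f (circleMap c q.1 q.2) :=
    hf.comp (by unfold circleMap; fun_prop)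
  have hperiod (r : ℝ) : Periodic (fun θ => f (circleMap c r θ)) (2 * π) := fun θ => by
    simp only [periodic_circleMap c r θ]
  calc ∫⁻ z, f z = ∫⁻ z, f (c + z) := (lintegral_add_left_eq_self f c).symm
    _ = ∫⁻ q in Ioi 0 ×ˢ Ioo (-π) π, ENNReal.ofReal q.1 * f (circleMap c q.1 q.2) := by
      simp only [← Complex.lintegral_comp_polarCoord_symm, hpolar, smul_eq_mul]
      rfl
    _ = ∫⁻ r in Ioi 0, ∫⁻ θ in Ioo (-π) π, ENNReal.ofReal r * f (circleMap c r θ) := by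
      rw [Measure.volume_eq_prod, ← Measure.prod_restrict]
      exact lintegral_prod _ (measurable_fst.ennreal_ofReal.mul hmeas).aemeasurable
    _ = ∫⁻ r in Ioi 0, ENNReal.ofReal r * ∫⁻ θ in Ioc 0 (2 * π), f (circleMap c r θ) := by
      refine lintegral_congr fun r => ?_
      rw [lintegral_const_mul' _ _ ENNReal.ofReal_ne_top, setLIntegral_congr Ioo_ae_eq_Ioc]
      congr 1
      simpa [two_mul] using (hperiod r).setLIntegral_Ioc_add_eq Real.two_pi_pos (-π) 0

theorem exists_mem_Ioc_sq_mul_lintegral_circleMap_le {f : ℂ → ℝ≥0∞} (hf : Measurable f)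
    (c : ℂ) {A a b : ℝ} (hA : ∫⁻ z, f z ≤ ENNReal.ofReal A) (ha : 0 < a) (hab : a < b) :
    ∃ r ∈ Ioc a b, ENNReal.ofReal (r ^ 2) * ∫⁻ θ in Ioc 0 (2 * π), f (circleMap c r θ) ≤
      ENNReal.ofReal (A / Real.log (b / a)) := by
  set J : ℝ → ℝ≥0∞ := fun r => ∫⁻ θ in Ioc 0 (2 * π), f (circleMap c r θ)
  set k := ENNReal.ofReal (A / Real.log (b / a))
  have hlog : 0 < Real.log (b / a) := Real.log_pos ((one_lt_div ha).2 hab)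
  have hJ : Measurable J :=
    (hf.comp (by unfold circleMap; fun_prop : Measurable fun q : ℝ × ℝ => circleMap c q.1 q.2)
      ).lintegral_prod_right'
  have hk : ∫⁻ r in Ioc a b, k * ENNReal.ofReal r⁻¹ = ENNReal.ofReal A := by
    rw [lintegral_const_mul _ measurable_inv.ennreal_ofReal, lintegral_Ioc_ofReal_inv ha hab.le,
      ← ENNReal.ofReal_mul' hlog.le, div_mul_cancel₀ _ hlog.ne']
  obtain ⟨r, hr, hrJ⟩ : ∃ r ∈ Ioc a b, ENNReal.ofReal r * J r ≤ k * ENNReal.ofReal r⁻¹ := by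
    by_contra! h
    have hlt := lintegral_strict_mono (μ := volume.restrict (Ioc a b))
      (by simp [Real.volume_Ioc, hab]) (measurable_id.ennreal_ofReal.mul hJ).aemeasurable
      (hk ▸ ENNReal.ofReal_ne_top) ((ae_restrict_mem measurableSet_Ioc).mono h)
    rw [hk] at hlt
    refine hlt.not_ge (le_trans ?_ hA)
    rw [lintegral_eq_lintegral_Ioi_mul_lintegral_circleMap hf c]
    exact lintegral_mono_set fun r hr => ha.trans hr.1
  have hr0 : 0 < r := ha.trans hr.1
  refine ⟨r, hr, ?_⟩
  calc ENNReal.ofReal (r ^ 2) * J r = ENNReal.ofReal r * (ENNReal.ofReal r * J r) := by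
        rw [sq, ENNReal.ofReal_mul hr0.le, mul_assoc]
    _ ≤ ENNReal.ofReal r * (k * ENNReal.ofReal r⁻¹) := by gcongr
    _ = k := by
        rw [mul_left_comm, ← ENNReal.ofReal_mul hr0.le, mul_inv_cancel₀ hr0.ne',
          ENNReal.ofReal_one, mul_one]

theorem ContinuousLinearMap.sq_norm_apply_le_of_complex {E : Type*} [NormedAddCommGroup E]
    [NormedSpace ℝ E] (L : ℂ →L[ℝ] E) (w : ℂ) :
    ‖L w‖ ^ 2 ≤ ‖w‖ ^ 2 * (‖L 1‖ ^ 2 + ‖L Complex.I‖ ^ 2) := by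
  have hw : L w = w.re • L 1 + w.im • L Complex.I := by
    rw [← map_smul, ← map_smul, ← map_add, Complex.real_smul, Complex.real_smul, mul_one,
      Complex.re_add_im]
  have htri : ‖L w‖ ≤ |w.re| * ‖L 1‖ + |w.im| * ‖L Complex.I‖ := by
    rw [hw]
    exact (norm_add_le _ _).trans_eq (by rw [norm_smul, norm_smul, Real.norm_eq_abs,
      Real.norm_eq_abs])
  have hnorm : ‖w‖ ^ 2 = |w.re| ^ 2 + |w.im| ^ 2 := by
    rw [Complex.sq_norm, Complex.normSq_apply, sq_abs, sq_abs, sq, sq]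
  rw [hnorm]
  nlinarith [norm_nonneg (L w), sq_nonneg (|w.re| * ‖L Complex.I‖ - |w.im| * ‖L 1‖)]

theorem sq_norm_deriv_comp_circleMap_le {ψ : ℂ → EuclideanSpace ℝ (Fin d)} {c : ℂ} {r θ : ℝ}
    (hψ : DifferentiableAt ℝ ψ (circleMap c r θ)) :
    ‖deriv (ψ ∘ circleMap c r) θ‖ ^ 2 ≤
      r ^ 2 * (‖pu ψ (circleMap c r θ)‖ ^ 2 + ‖pv ψ (circleMap c r θ)‖ ^ 2) := by
  rw [(hψ.hasFDerivAt.comp_hasDerivAt θ (hasDerivAt_circleMap c r θ)).deriv]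
  have := (fderiv ℝ ψ (circleMap c r θ)).sq_norm_apply_le_of_complex (circleMap 0 r θ * Complex.I)
  rwa [norm_mul, norm_circleMap_zero, Complex.norm_I, mul_one, sq_abs] at this

theorem isOpen_unitDisk : IsOpen unitDisk :=
  Metric.isOpen_ball

def dirichletDensity (ψ : ℂ → EuclideanSpace ℝ (Fin d)) : ℂ → ℝ≥0∞ :=
  unitDisk.indicator fun q => ENNReal.ofReal (‖pu ψ q‖ ^ 2 + ‖pv ψ q‖ ^ 2)

theorem measurable_dirichletDensity (ψ : ℂ → EuclideanSpace ℝ (Fin d)) :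
    Measurable (dirichletDensity ψ) := by
  refine Measurable.indicator ?_ isOpen_unitDisk.measurableSet
  have hu : Measurable (pu ψ) := measurable_fderiv_apply_const ℝ ψ 1
  have hv : Measurable (pv ψ) := measurable_fderiv_apply_const ℝ ψ Complex.I
  fun_prop

theorem lintegral_dirichletDensity {ψ : ℂ → EuclideanSpace ℝ (Fin d)}
    (hψ : IntegrableOn (fun q => ‖pu ψ q‖ ^ 2 + ‖pv ψ q‖ ^ 2) unitDisk) :
    ∫⁻ z, dirichletDensity ψ z = ENNReal.ofReal (2 * dirichletIntegral ψ) := by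
  rw [dirichletDensity, lintegral_indicator isOpen_unitDisk.measurableSet,
    ← ofReal_integral_eq_lintegral_ofReal hψ (ae_of_all _ fun q => by positivity),
    dirichletIntegral, ← mul_assoc]
  norm_num

theorem sq_arcImageLength_le {φ : ℂ → EuclideanSpace ℝ (Fin d)}
    (hφ : DifferentiableOn ℝ φ unitDisk) (p : ℂ) (r : ℝ) :
    ENNReal.ofReal (arcImageLength φ p r ^ 2) ≤ ENNReal.ofReal (2 * π) *
      (ENNReal.ofReal (r ^ 2) * ∫⁻ θ in Ioc 0 (2 * π), dirichletDensity φ (circleMap p r θ)) := by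
  set S := Icc 0 (2 * π) ∩ circleMap p r ⁻¹' unitDisk
  have hS : MeasurableSet S :=
    measurableSet_Icc.inter (isOpen_unitDisk.measurableSet.preimage (measurable_circleMap p r))
  have harc : arcImageLength φ p r = ∫ θ in S, ‖deriv (φ ∘ circleMap p r) θ‖ := rfl
  have hlength :
      ENNReal.ofReal (arcImageLength φ p r) ≤ ∫⁻ θ in S, ‖deriv (φ ∘ circleMap p r) θ‖ₑ := by
    have := enorm_integral_le_lintegral_enorm (μ := volume.restrict S)
      fun θ => ‖deriv (φ ∘ circleMap p r) θ‖
    simp only [enorm_norm] at this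
    rwa [harc, ← Real.enorm_of_nonneg (setIntegral_nonneg hS fun θ _ => norm_nonneg _)]
  have hpoint : ∀ θ ∈ S, ‖deriv (φ ∘ circleMap p r) θ‖ₑ ^ 2 ≤
      ENNReal.ofReal (r ^ 2) * dirichletDensity φ (circleMap p r θ) := by
    rintro θ ⟨-, hθ⟩
    rw [dirichletDensity, indicator_of_mem (mem_preimage.1 hθ), ← ENNReal.ofReal_mul (sq_nonneg r),
      ← ofReal_norm, ← ENNReal.ofReal_pow (norm_nonneg _)]
    exact ENNReal.ofReal_le_ofReal <| sq_norm_deriv_comp_circleMap_le <|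
      hφ.differentiableAt (isOpen_unitDisk.mem_nhds hθ)
  have hvol : volume S ≤ ENNReal.ofReal (2 * π) :=
    (measure_mono inter_subset_left).trans_eq (by rw [Real.volume_Icc, sub_zero])
  calc ENNReal.ofReal (arcImageLength φ p r ^ 2)
      = ENNReal.ofReal (arcImageLength φ p r) ^ 2 := by
        rw [harc, ENNReal.ofReal_pow (setIntegral_nonneg hS fun θ _ => norm_nonneg _)]
    _ ≤ (∫⁻ θ in S, ‖deriv (φ ∘ circleMap p r) θ‖ₑ) ^ 2 := by gcongr
    _ ≤ volume S * ∫⁻ θ in S, ‖deriv (φ ∘ circleMap p r) θ‖ₑ ^ 2 := by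
      simpa only [Measure.restrict_apply_univ] using
        sq_lintegral_le_measure_univ_mul_lintegral_sq (volume.restrict S)
          (measurable_deriv _).enorm.aemeasurable
    _ ≤ ENNReal.ofReal (2 * π) *
        ∫⁻ θ in Icc 0 (2 * π), ENNReal.ofReal (r ^ 2) * dirichletDensity φ (circleMap p r θ) := by
      gcongr ?_ * ?_
      exact (setLIntegral_mono' hS hpoint).trans (lintegral_mono_set inter_subset_left)
    _ = _ := by
      rw [← setLIntegral_congr Ioc_ae_eq_Icc, lintegral_const_mul' _ _ ENNReal.ofReal_ne_top]

theorem courant_lebesgue_general {d : ℕ} (φ : ℂ → EuclideanSpace ℝ (Fin d)) (M : ℝ)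
    (hφ : DifferentiableOn ℝ φ unitDisk)
    (hφL2 : IntegrableOn (fun q => ‖pu φ q‖ ^ 2 + ‖pv φ q‖ ^ 2) unitDisk)
    (hM : dirichletIntegral φ ≤ M)
    (p : ℂ)
    (δ : ℝ) (hδ0 : 0 < δ) (hδ1 : δ < 1) :
    ∃ ρ ∈ Set.Icc δ (Real.sqrt δ),
      arcImageLength φ p ρ ^ 2 ≤ 2 * π * (4 * M) / Real.log (1 / δ) := by
  have hM0 : 0 ≤ M := hM.trans' <| mul_nonneg (by norm_num) <|
    setIntegral_nonneg isOpen_unitDisk.measurableSet fun q _ => by positivity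
  have hδ : δ < √δ := Real.lt_sqrt_of_sq_lt (by nlinarith)
  have hL : 0 < Real.log (1 / δ) := Real.log_pos ((one_lt_div hδ0).2 hδ1)
  have hlog : Real.log (√δ / δ) = Real.log (1 / δ) / 2 := by
    rw [Real.log_div (Real.sqrt_pos.2 hδ0).ne' hδ0.ne', Real.log_sqrt hδ0.le, one_div,
      Real.log_inv]
    ring
  have henergy : ∫⁻ z, dirichletDensity φ z ≤ ENNReal.ofReal (2 * M) := by
    rw [lintegral_dirichletDensity hφL2]
    gcongr
  obtain ⟨r, hr, hr_le⟩ := exists_mem_Ioc_sq_mul_lintegral_circleMap_le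
    (measurable_dirichletDensity φ) p henergy hδ0 hδ
  refine ⟨r, Ioc_subset_Icc_self hr, ?_⟩
  rw [← ENNReal.ofReal_le_ofReal_iff (by positivity)]
  calc ENNReal.ofReal (arcImageLength φ p r ^ 2)
      ≤ ENNReal.ofReal (2 * π) * ENNReal.ofReal (2 * M / Real.log (√δ / δ)) :=
        (sq_arcImageLength_le hφ p r).trans (by gcongr)
    _ = ENNReal.ofReal (2 * π * (4 * M) / Real.log (1 / δ)) := by
        rw [← ENNReal.ofReal_mul (by positivity), hlog]
        ring_nf

/-- **Courant–Lebesgue lemma.** Let `φ ∈ H¹(D;ℝᵈ)` with `D(φ) ≤ M`,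
let `p ∈ D̄` and `0 < δ < 1`.  Then there exists `ρ ∈ [δ, √δ]` such that the restriction
of `φ` to the arc `C_ρ = D ∩ ∂B(p,ρ)` is absolutely continuous and the length of its
image satisfies `(length)² ≤ 2π·4M / log(1/δ)`. -/
theorem courant_lebesgue {d : ℕ} (φ : ℂ → EuclideanSpace ℝ (Fin d)) (M : ℝ)
    (hφ : DifferentiableOn ℝ φ unitDisk)
    (hφL2 : IntegrableOn (fun q => ‖pu φ q‖ ^ 2 + ‖pv φ q‖ ^ 2) unitDisk)
    (hM : dirichletIntegral φ ≤ M)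
    (p : ℂ) (hp : p ∈ Metric.closedBall (0 : ℂ) 1)
    (δ : ℝ) (hδ0 : 0 < δ) (hδ1 : δ < 1) :
    ∃ ρ ∈ Set.Icc δ (Real.sqrt δ),
      arcImageLength φ p ρ ^ 2 ≤ 2 * π * (4 * M) / Real.log (1 / δ) :=
  courant_lebesgue_general φ M hφ hφL2 hM p δ hδ0 hδ1

end
end
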